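/- Let 0 < q < 1, let n ≥ 1 be an integer, and set c := 1/(2·ln q). Then for all x > 0, the q-derivative at x of the function G(x) := x^{3/2}·exp(c·(ln(x/q))²)·S_{n−1}(qx; q) / ( q^{1/2}·[n]_q ) equals x^{−1/2}·exp(c·(ln x)²)·S_n(x; q). (This is the indefinite q-integral ∫ x^{−1/2} e^{c ln² x} S_n(x;q) d_q x = x^{3/2} e^{c ln²(x/q)} S_{n−1}(qx;q)/(√q·[n]_q).) -/

import Mathlib

/-!
With `2 c ln q = 1`, the weight `w(x) = x^{-1/2} e^{c ln² x}` satisfies `w(qx) = x w(x)`, and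
`x^{3/2} e^{c ln²(x/q)} = √q x w(x)`. So if `G` is the function being `q`-differentiated,
`G(x) - G(qx) = x w(x) (S_{n-1}(qx) - qx S_{n-1}(q²x)) / [n]_q`, and the contiguous relation
`S_m(qx) - qx S_m(q²x) = (1 - q^{m+1}) S_{m+1}(x)` turns this into `(1 - q) x w(x) S_n(x)`.
The contiguous relation is a recurrence between the coefficients of `(q;q)_m S_m`, using that the
coefficient of `x^{m+1}` vanishes because `(q^{-m}; q)_{m+1} = 0`.
-/

/-- The Jackson `q`-derivative `(D_q f)(x) = (f(x) - f(qx)) / ((1-q)x)`. -/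
noncomputable def qDeriv (q : ℝ) (f : ℝ → ℝ) (x : ℝ) : ℝ :=
  (f x - f (q * x)) / ((1 - q) * x)

/-- The finite q-shifted factorial `(z; q)_k`. -/
noncomputable def qPoch (z q : ℝ) (k : ℕ) : ℝ :=
  ∏ j ∈ Finset.range k, (1 - z * q ^ j)

/-- The q-bracket `[n]_q = (1 - qⁿ)/(1 - q)`. -/
noncomputable def qBracketN (q : ℝ) (n : ℕ) : ℝ := (1 - q ^ n) / (1 - q)

/-- The Stieltjes–Wigert polynomial
`S_n(x;q) = (1/(q;q)_n) Σ_{k=0}^n ((q^{−n};q)_k/(q;q)_k) q^{k(k−1)/2} q^{(n+1)k} x^k`. -/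
noncomputable def stieltjesWigert (q : ℝ) (n : ℕ) (x : ℝ) : ℝ :=
  (1 / qPoch q q n) * ∑ k ∈ Finset.range (n + 1),
    (qPoch ((q : ℝ) ^ (-(n : ℤ))) q k / qPoch q q k) *
      q ^ (k * (k - 1) / 2) * q ^ ((n + 1) * k) * x ^ k

open Finset Real

theorem qPoch_succ (z q : ℝ) (k : ℕ) : qPoch z q (k + 1) = qPoch z q k * (1 - z * q ^ k) :=
  prod_range_succ _ _

theorem qPoch_succ' (z q : ℝ) (k : ℕ) : qPoch z q (k + 1) = (1 - z) * qPoch (z * q) q k := by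
  simp only [qPoch, prod_range_succ', pow_succ', pow_zero, mul_one, mul_assoc]
  exact mul_comm _ _

theorem one_sub_pow_succ_ne_zero {q : ℝ} (hq : 0 ≤ q) (hq1 : q ≠ 1) (k : ℕ) :
    1 - q * q ^ k ≠ 0 := by
  rw [← pow_succ', sub_ne_zero, ne_comm, ne_eq, pow_eq_one_iff_of_nonneg hq k.succ_ne_zero]
  exact hq1

theorem qPoch_self_ne_zero {q : ℝ} (hq : 0 ≤ q) (hq1 : q ≠ 1) (k : ℕ) : qPoch q q k ≠ 0 :=
  prod_ne_zero_iff.2 fun j _ => one_sub_pow_succ_ne_zero hq hq1 j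

noncomputable def stieltjesWigertCoeff (q : ℝ) (n k : ℕ) : ℝ :=
  qPoch (q ^ (-(n : ℤ))) q k / qPoch q q k * q ^ (k * (k - 1) / 2) * q ^ ((n + 1) * k)

theorem stieltjesWigertCoeff_succ_succ {q : ℝ} (hq : 0 < q) (hq1 : q ≠ 1) (m j : ℕ) :
    stieltjesWigertCoeff q (m + 1) (j + 1) =
      q ^ (j + 1) * stieltjesWigertCoeff q m (j + 1) -
        q ^ (2 * j + 1) * stieltjesWigertCoeff q m j := by
  have hz : (q : ℝ) ^ (-((m + 1 : ℕ) : ℤ)) * q = q ^ (-(m : ℤ)) := by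
    rw [← zpow_add_one₀ hq.ne']; congr 1; push_cast; ring
  have hQ := qPoch_self_ne_zero hq.le hq1 j
  have hQ' := one_sub_pow_succ_ne_zero hq.le hq1 j
  unfold stieltjesWigertCoeff
  rw [qPoch_succ', hz, Nat.triangle_succ, qPoch_succ q q, qPoch_succ (q ^ (-(m : ℤ)))]
  simp only [zpow_neg, zpow_natCast]
  field_simp
  ring

theorem stieltjesWigertCoeff_self_succ {q : ℝ} (hq : q ≠ 0) (m : ℕ) :
    stieltjesWigertCoeff q m (m + 1) = 0 := by
  have : qPoch (q ^ (-(m : ℤ))) q (m + 1) = 0 :=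
    prod_eq_zero (self_mem_range_succ m) (by simp [hq])
  rw [stieltjesWigertCoeff, this, zero_div, zero_mul, zero_mul]

theorem stieltjesWigertCoeff_zero (q : ℝ) (n : ℕ) : stieltjesWigertCoeff q n 0 = 1 := by
  simp [stieltjesWigertCoeff, qPoch]

theorem sum_stieltjesWigertCoeff_succ {q : ℝ} (hq : 0 < q) (hq1 : q ≠ 1) (m : ℕ) (x : ℝ) :
    ∑ k ∈ range (m + 2), stieltjesWigertCoeff q (m + 1) k * x ^ k =
      ∑ k ∈ range (m + 1), stieltjesWigertCoeff q m k * (q * x) ^ k -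
        q * x * ∑ k ∈ range (m + 1), stieltjesWigertCoeff q m k * (q * (q * x)) ^ k := by
  have hextend : ∑ k ∈ range (m + 1), stieltjesWigertCoeff q m k * (q * x) ^ k =
      ∑ k ∈ range (m + 2), stieltjesWigertCoeff q m k * (q * x) ^ k := by
    rw [sum_range_succ _ (m + 1), stieltjesWigertCoeff_self_succ hq.ne' m, zero_mul, add_zero]
  rw [hextend, sum_range_succ', sum_range_succ' _ (m + 1), mul_sum, add_sub_right_comm,
    ← sum_sub_distrib]
  congr 1
  refine sum_congr rfl fun j _ => ?_
  rw [stieltjesWigertCoeff_succ_succ hq hq1]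
  ring

theorem stieltjesWigert_eq_sum_div (q : ℝ) (n : ℕ) (x : ℝ) :
    stieltjesWigert q n x =
      (∑ k ∈ range (n + 1), stieltjesWigertCoeff q n k * x ^ k) / qPoch q q n := by
  rw [stieltjesWigert, one_div_mul_eq_div]
  rfl

theorem one_sub_pow_mul_stieltjesWigert_succ {q : ℝ} (hq : 0 < q) (hq1 : q ≠ 1) (m : ℕ)
    (x : ℝ) :
    (1 - q ^ (m + 1)) * stieltjesWigert q (m + 1) x =
      stieltjesWigert q m (q * x) - q * x * stieltjesWigert q m (q * (q * x)) := by
  have hQ := qPoch_self_ne_zero hq.le hq1 m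
  have hQ' := one_sub_pow_succ_ne_zero hq.le hq1 m
  simp only [stieltjesWigert_eq_sum_div]
  rw [qPoch_succ, sum_stieltjesWigertCoeff_succ hq hq1, pow_succ']
  field_simp

noncomputable def stieltjesWigertWeight (c x : ℝ) : ℝ :=
  x ^ (-(1 : ℝ) / 2) * exp (c * log x ^ 2)

theorem stieltjesWigertWeight_mul_left {q c x : ℝ} (hq : 0 < q) (hx : 0 < x)
    (hc : 2 * c * log q = 1) :
    stieltjesWigertWeight c (q * x) = x * stieltjesWigertWeight c x := by
  have hexponent : c * log (q * x) ^ 2 = c * log x ^ 2 + log x + log q * (1 / 2) := by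
    rw [log_mul hq.ne' hx.ne']
    linear_combination (log x + log q / 2) * hc
  have hsqrt : q ^ (-(1 : ℝ) / 2) * q ^ ((1 : ℝ) / 2) = 1 := by
    rw [← rpow_add hq]; norm_num
  rw [stieltjesWigertWeight, stieltjesWigertWeight, hexponent, exp_add, exp_add, exp_log hx,
    ← rpow_def_of_pos hq, mul_rpow hq.le hx.le]
  linear_combination (x * x ^ (-(1 : ℝ) / 2) * exp (c * log x ^ 2)) * hsqrt

theorem rpow_three_halves_mul_exp_log_div_sq {q c t : ℝ} (hq : 0 < q) (ht : 0 < t)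
    (hc : 2 * c * log q = 1) :
    t ^ ((3 : ℝ) / 2) * exp (c * log (t / q) ^ 2) =
      q ^ ((1 : ℝ) / 2) * t * stieltjesWigertWeight c t := by
  have hexponent : c * log (t / q) ^ 2 = c * log t ^ 2 + log q * (1 / 2) - log t := by
    rw [log_div ht.ne' hq.ne']
    linear_combination (log q / 2 - log t) * hc
  rw [stieltjesWigertWeight, hexponent, exp_sub, exp_add, exp_log ht, ← rpow_def_of_pos hq,
    show (3 : ℝ) / 2 = 1 + 1 + -1 / 2 by norm_num, rpow_add ht, rpow_add ht, rpow_one]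
  field_simp

/-- Indefinite q-integral for Stieltjes–Wigert polynomials:
`∫ x^{−1/2} e^{c ln² x} S_n(x;q) d_q x = x^{3/2} e^{c ln²(x/q)} S_{n−1}(qx;q)/(√q·[n]_q)`,
where `c = 1/(2 ln q)`. -/
theorem qIntegral_stieltjesWigert (q : ℝ) (hq : 0 < q) (hq1 : q < 1)
    (n : ℕ) (hn : 1 ≤ n) (c : ℝ) (hc : c = 1 / (2 * Real.log q)) :
    ∀ x : ℝ, 0 < x →
      qDeriv q
        (fun t => t ^ ((3 : ℝ) / 2) * Real.exp (c * (Real.log (t / q)) ^ 2) *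
          stieltjesWigert q (n - 1) (q * t) / (q ^ ((1 : ℝ) / 2) * qBracketN q n)) x
      = x ^ (-(1 : ℝ) / 2) * Real.exp (c * (Real.log x) ^ 2) * stieltjesWigert q n x := by
  intro x hx
  obtain ⟨m, rfl⟩ := Nat.exists_eq_add_of_le' hn
  have hc' : 2 * c * log q = 1 := by
    rw [hc]; field_simp [(log_neg hq hq1).ne]
  have hS := one_sub_pow_mul_stieltjesWigert_succ hq hq1.ne m x
  have hpow : 1 - q ^ (m + 1) ≠ 0 := (sub_pos.2 (pow_lt_one₀ hq.le hq1 m.succ_ne_zero)).ne'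
  have hq' : 1 - q ≠ 0 := (sub_pos.2 hq1).ne'
  have hsqrt : q ^ ((1 : ℝ) / 2) ≠ 0 := (rpow_pos_of_pos hq _).ne'
  simp only [qDeriv, Nat.add_sub_cancel]
  rw [rpow_three_halves_mul_exp_log_div_sq hq hx hc',
    rpow_three_halves_mul_exp_log_div_sq hq (mul_pos hq hx) hc',
    stieltjesWigertWeight_mul_left hq hx hc', qBracketN,
    eq_div_of_mul_eq hpow ((mul_comm _ _).trans hS), stieltjesWigertWeight]
  field_simp
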